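/- arXiv:2004.13014 — 3 statements merged into one kernel-verified Lean document; each statement's English description precedes it below -/
import Mathlib

section
/- If P is a symmetric positive definite solution of the algebraic Riccati equation AᵀP + PA - PBBᵀP + εI = 0 with ε > 0, then for any complex scalar ρ with Re(ρ) ≥ 1/2, the matrix A - ρ BBᵀP is Hurwitz stable. -/
/-!
Lyapunov argument: if `Mᴴ P + P M` is negative definite for a positive definite `P`, then for an
eigenpair `M v = μ v` the quadratic form `v* (Mᴴ P + P M) v = 2 Re μ · v* P v` forces `Re μ < 0`.
For `M = A - ρ B Bᵀ P` the Riccati equation gives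
`Mᴴ P + P M = -(ε I + (2 Re ρ - 1) (Bᵀ P)ᵀ (Bᵀ P))`, which is negative definite when `Re ρ ≥ 1/2`.
-/

open Matrix

open scoped MatrixOrder ComplexOrder

namespace Matrix

variable {n : Type*} [Fintype n]

def lyapunov {α : Type*} [Mul α] [AddCommMonoid α] [Star α] (M P : Matrix n n α) :
    Matrix n n α :=
  Mᴴ * P + P * M

theorem PosSemidef.map_ofReal [DecidableEq n] {P : Matrix n n ℝ} (hP : P.PosSemidef) :
    (P.map ((↑) : ℝ → ℂ)).PosSemidef := by
  obtain ⟨S, rfl⟩ := CStarAlgebra.nonneg_iff_eq_star_mul_self.mp hP.nonneg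
  rw [star_eq_conjTranspose, conjTranspose_eq_transpose_of_trivial]
  convert posSemidef_conjTranspose_mul_self (S.map ((↑) : ℝ → ℂ))
  rw [← conjTranspose_map _ fun _ => (Complex.conj_ofReal _).symm,
    conjTranspose_eq_transpose_of_trivial]
  exact Matrix.map_mul (f := Complex.ofRealHom)

theorem PosDef.map_ofReal [DecidableEq n] {P : Matrix n n ℝ} (hP : P.PosDef) :
    (P.map ((↑) : ℝ → ℂ)).PosDef := by
  refine hP.posSemidef.map_ofReal.posDef_iff_det_ne_zero.mpr ?_
  rw [show P.map ((↑) : ℝ → ℂ) = Complex.ofRealHom.mapMatrix P from rfl, ← RingHom.map_det]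
  exact Complex.ofReal_ne_zero.mpr hP.det_pos.ne'

theorem re_lt_zero_of_lyapunov {𝕜 : Type*} [RCLike 𝕜] {M P : Matrix n n 𝕜}
    (hP : P.PosDef) (hL : (-lyapunov M P).PosDef) {μ : 𝕜} {v : n → 𝕜} (hv : v ≠ 0)
    (hμ : M *ᵥ v = μ • v) : RCLike.re μ < 0 := by
  have hquad : star v ⬝ᵥ (lyapunov M P *ᵥ v) =
      (2 * RCLike.re μ : ℝ) * (star v ⬝ᵥ (P *ᵥ v)) := by
    rw [lyapunov, add_mulVec, ← mulVec_mulVec, ← mulVec_mulVec, dotProduct_add, dotProduct_mulVec,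
      ← star_mulVec, hμ, star_smul, smul_dotProduct, mulVec_smul, dotProduct_smul,
      RCLike.ofReal_mul, RCLike.ofReal_ofNat, ← RCLike.add_conj]
    simp only [smul_eq_mul, RCLike.star_def]
    ring
  have hneg := hL.re_dotProduct_pos hv
  rw [neg_mulVec, dotProduct_neg, hquad, map_neg, RCLike.re_ofReal_mul] at hneg
  nlinarith [hP.re_dotProduct_pos hv]

theorem lyapunov_map_ofReal_sub_smul [DecidableEq n] (A K P : Matrix n n ℝ) (hK : Kᵀ * P = P * K)
    (ρ : ℂ) :
    lyapunov (A.map (↑) - ρ • K.map (↑)) (P.map ((↑) : ℝ → ℂ)) =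
      (Aᵀ * P + P * A - (2 * ρ.re) • (P * K)).map (↑) := by
  set φ := (Algebra.ofId ℝ ℂ).mapMatrix (m := n)
  have hφ (X : Matrix n n ℝ) : X.map (↑) = φ X := rfl
  have hφ_conjTranspose (X : Matrix n n ℝ) : (φ X)ᴴ = φ Xᵀ := by
    rw [← hφ, ← hφ, ← conjTranspose_map _ fun _ => (Complex.conj_ofReal _).symm,
      conjTranspose_eq_transpose_of_trivial]
  have hρ : star ρ + ρ = ((2 * ρ.re : ℝ) : ℂ) := by rw [add_comm]; exact Complex.add_conj ρ
  simp only [lyapunov, hφ, conjTranspose_sub, conjTranspose_smul, hφ_conjTranspose, map_sub,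
    map_add, map_smul, sub_mul, mul_sub, smul_mul, mul_smul_comm, ← map_mul, hK]
  rw [← Complex.coe_smul, ← hρ, add_smul]
  abel

end Matrix

/-- If `P` is a symmetric positive definite solution of the Riccati equation
`AᵀP + PA - PBBᵀP + εI = 0` with `ε > 0`, then for any complex `ρ` with
`Re ρ ≥ 1/2`, the matrix `A - ρ B Bᵀ P` is Hurwitz stable. -/
theorem riccati_hurwitz (n m : ℕ) (A : Matrix (Fin n) (Fin n) ℝ)
    (B : Matrix (Fin n) (Fin m) ℝ) (ε : ℝ) (hε : 0 < ε)
    (P : Matrix (Fin n) (Fin n) ℝ) (hP : P.PosDef) (hPsymm : P.IsSymm)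
    (hric : Aᵀ * P + P * A - P * B * Bᵀ * P + ε • (1 : Matrix (Fin n) (Fin n) ℝ) = 0)
    (ρ : ℂ) (hρ : (1 : ℝ) / 2 ≤ ρ.re) :
    ∀ μ : ℂ, (∃ v : Fin n → ℂ, v ≠ 0 ∧
      ((A.map (fun x : ℝ => (x : ℂ))) -
        ρ • ((B * Bᵀ * P).map (fun x : ℝ => (x : ℂ)))).mulVec v = μ • v) →
      μ.re < 0 := by
  rintro μ ⟨v, hv, hμ⟩
  have hK : (B * Bᵀ * P)ᵀ * P = P * (B * Bᵀ * P) := by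
    simp [hPsymm.eq, Matrix.mul_assoc]
  have hPK : P * (B * Bᵀ * P) = (Bᵀ * P)ᴴ * (Bᵀ * P) := by
    simp [hPsymm.eq, Matrix.mul_assoc]
  have hriccati : Aᵀ * P + P * A - (2 * ρ.re) • (P * (B * Bᵀ * P)) =
      -(ε • 1 + (2 * ρ.re - 1) • ((Bᵀ * P)ᴴ * (Bᵀ * P))) := by
    rw [← hPK]
    simp only [Matrix.mul_assoc] at hric ⊢
    linear_combination (norm := module) hric
  have hdiss : (ε • 1 + (2 * ρ.re - 1) • ((Bᵀ * P)ᴴ * (Bᵀ * P))).PosDef :=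
    (PosDef.one.smul hε).add_posSemidef ((posSemidef_conjTranspose_mul_self _).smul (by linarith))
  refine re_lt_zero_of_lyapunov hP.map_ofReal ?_ hv hμ
  rw [lyapunov_map_ofReal_sub_smul A _ P hK, hriccati, Matrix.map_neg _ Complex.ofReal_neg,
    neg_neg]
  exact hdiss.map_ofReal
end

section
/- Suppose P = Pᵀ > 0 solves the discrete algebraic Riccati equation AᵀPA - P - AᵀPB(I + BᵀPB)^{-1}BᵀPA + εI = 0 with ε > 0, and let K = (I + BᵀPB)^{-1}BᵀPA. Then A - BK is Schur stable. -/
/-!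
With `F = A - BK`, the Riccati equation is equivalent to the closed-loop Lyapunov identity
`P - FᵀPF = εI + KᵀK`, whose right-hand side is positive definite. For an eigenpair `F v = μ v`
(over `ℂ`), evaluating the quadratic form of `P - FᴴPF` at `v` gives
`(1 - |μ|²) v*Pv > 0`, and `v*Pv > 0` forces `|μ| < 1`.
-/

open Matrix

namespace Matrix

open scoped ComplexOrder

variable {ι : Type*} [Fintype ι]

theorem closedLoop_transpose_mul_mul {R κ : Type*} [CommRing R] [Fintype κ] [DecidableEq κ]
    {A P : Matrix ι ι R} {B : Matrix ι κ R} {K : Matrix κ ι R}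
    (hK : (1 + Bᵀ * P * B) * K = Bᵀ * P * A) :
    (A - B * K)ᵀ * P * (A - B * K) = Aᵀ * P * A - Aᵀ * P * B * K - Kᵀ * K := by
  have hBK : Bᵀ * P * B * K = Bᵀ * P * A - K := by
    rw [← hK, Matrix.add_mul, Matrix.one_mul, add_sub_cancel_left]
  have hBK' : Kᵀ * Bᵀ * P * B * K = Kᵀ * Bᵀ * P * A - Kᵀ * K := by
    simp only [Matrix.mul_assoc] at hBK ⊢
    rw [hBK, Matrix.mul_sub]
  simp only [transpose_sub, transpose_mul, Matrix.sub_mul, Matrix.mul_sub, Matrix.mul_assoc]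
    at hBK' ⊢
  rw [hBK']
  abel

theorem norm_lt_one_of_posDef_sub_conjTranspose_mul_mul {𝕜 : Type*} [RCLike 𝕜]
    {F P : Matrix ι ι 𝕜} (hP : P.PosDef) (hF : (P - Fᴴ * P * F).PosDef)
    {μ : 𝕜} {v : ι → 𝕜} (hv : v ≠ 0) (hμ : F *ᵥ v = μ • v) : ‖μ‖ < 1 := by
  have hquad : star v ⬝ᵥ (Fᴴ * P * F) *ᵥ v = ((‖μ‖ ^ 2 : ℝ) : 𝕜) * (star v ⬝ᵥ P *ᵥ v) := by
    rw [← mulVec_mulVec, ← mulVec_mulVec, dotProduct_mulVec, ← star_mulVec, hμ, mulVec_smul,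
      star_smul, smul_dotProduct, dotProduct_smul, smul_smul, smul_eq_mul, RCLike.star_def,
      RCLike.conj_mul]
    norm_cast
  have hpos := hF.re_dotProduct_pos hv
  rw [sub_mulVec, dotProduct_sub, hquad, map_sub, RCLike.re_ofReal_mul] at hpos
  have hμ2 : ‖μ‖ ^ 2 < 1 := by nlinarith [hP.re_dotProduct_pos hv]
  exact (pow_lt_one_iff_of_nonneg (norm_nonneg μ) two_ne_zero).mp hμ2

theorem PosDef.map_ofReal_s11 {𝕜 : Type*} [RCLike 𝕜] [DecidableEq ι] {M : Matrix ι ι ℝ}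
    (hM : M.PosDef) : (M.map ((↑) : ℝ → 𝕜)).PosDef := by
  open scoped MatrixOrder in
  obtain ⟨N, rfl⟩ := CStarAlgebra.nonneg_iff_eq_star_mul_self.mp hM.posSemidef.nonneg
  have hmap : (star N * N).map ((↑) : ℝ → 𝕜) = (N.map (↑))ᴴ * N.map (↑) := by
    rw [← conjTranspose_map _ (fun _ => (RCLike.conj_ofReal _).symm), star_eq_conjTranspose]
    exact Matrix.map_mul (f := algebraMap ℝ 𝕜)
  rw [hmap, (posSemidef_conjTranspose_mul_self _).posDef_iff_det_ne_zero, ← hmap]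
  exact (RingHom.map_det (algebraMap ℝ 𝕜) _).symm.trans_ne
    (RCLike.ofReal_ne_zero.mpr hM.det_pos.ne')

theorem norm_lt_one_of_posDef_sub_transpose_mul_mul_map {𝕜 : Type*} [RCLike 𝕜] [DecidableEq ι]
    {F P : Matrix ι ι ℝ} (hP : P.PosDef) (hF : (P - Fᵀ * P * F).PosDef)
    {μ : 𝕜} {v : ι → 𝕜} (hv : v ≠ 0) (hμ : F.map (↑) *ᵥ v = μ • v) : ‖μ‖ < 1 := by
  refine norm_lt_one_of_posDef_sub_conjTranspose_mul_mul hP.map_ofReal_s11 ?_ hv hμ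
  have hmap : (P - Fᵀ * P * F).map ((↑) : ℝ → 𝕜) =
      P.map (↑) - (F.map (↑))ᴴ * P.map (↑) * F.map (↑) := by
    rw [← conjTranspose_map _ (fun _ => (RCLike.conj_ofReal _).symm),
      conjTranspose_eq_transpose_of_trivial]
    have h := map_sub ((algebraMap ℝ 𝕜).mapMatrix (m := ι)) P (Fᵀ * P * F)
    simp only [map_mul] at h
    exact h
  exact hmap ▸ hF.map_ofReal_s11

end Matrix

theorem discrete_riccati_schur_general (n m : ℕ) (A : Matrix (Fin n) (Fin n) ℝ)
    (B : Matrix (Fin n) (Fin m) ℝ) (ε : ℝ) (hε : 0 < ε)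
    (P : Matrix (Fin n) (Fin n) ℝ) (hP : P.PosDef)
    (hric : Aᵀ * P * A - P -
        Aᵀ * P * B * ((1 : Matrix (Fin m) (Fin m) ℝ) + Bᵀ * P * B)⁻¹ * Bᵀ * P * A +
        ε • (1 : Matrix (Fin n) (Fin n) ℝ) = 0)
    (K : Matrix (Fin m) (Fin n) ℝ)
    (hK : K = ((1 : Matrix (Fin m) (Fin m) ℝ) + Bᵀ * P * B)⁻¹ * (Bᵀ * P * A)) :
    ∀ μ : ℂ, (∃ v : Fin n → ℂ, v ≠ 0 ∧
      ((A - B * K).map (fun x : ℝ => (x : ℂ))).mulVec v = μ • v) →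
      ‖μ‖ < 1 := by
  rintro μ ⟨v, hv, hμ⟩
  set S : Matrix (Fin m) (Fin m) ℝ := 1 + Bᵀ * P * B
  have hS : S.PosDef := PosDef.one.add_posSemidef <| by
    simpa only [conjTranspose_eq_transpose_of_trivial] using
      hP.posSemidef.conjTranspose_mul_mul_same B
  have hSK : S * K = Bᵀ * P * A := by
    rw [hK, mul_nonsing_inv_cancel_left _ _ (isUnit_iff_ne_zero.mpr hS.det_pos.ne')]
  have hgap : P - (A - B * K)ᵀ * P * (A - B * K) = ε • 1 + Kᵀ * K := by
    rw [closedLoop_transpose_mul_mul hSK, ← sub_eq_zero, ← neg_eq_zero, ← hric, hK]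
    simp only [Matrix.mul_assoc]
    abel
  have hgap_pos : (ε • 1 + Kᵀ * K).PosDef := (PosDef.one.smul hε).add_posSemidef <| by
    simpa only [conjTranspose_eq_transpose_of_trivial] using posSemidef_conjTranspose_mul_self K
  exact norm_lt_one_of_posDef_sub_transpose_mul_mul_map hP (hgap ▸ hgap_pos) hv hμ

/-- If `P = Pᵀ > 0` solves the discrete algebraic Riccati equation
`AᵀPA - P - AᵀPB(I + BᵀPB)⁻¹BᵀPA + εI = 0` with `ε > 0`, and
`K = (I + BᵀPB)⁻¹BᵀPA`, then `A - BK` is Schur stable. -/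
theorem discrete_riccati_schur (n m : ℕ) (A : Matrix (Fin n) (Fin n) ℝ)
    (B : Matrix (Fin n) (Fin m) ℝ) (ε : ℝ) (hε : 0 < ε)
    (P : Matrix (Fin n) (Fin n) ℝ) (hP : P.PosDef) (hPsymm : P.IsSymm)
    (hric : Aᵀ * P * A - P -
        Aᵀ * P * B * ((1 : Matrix (Fin m) (Fin m) ℝ) + Bᵀ * P * B)⁻¹ * Bᵀ * P * A +
        ε • (1 : Matrix (Fin n) (Fin n) ℝ) = 0)
    (K : Matrix (Fin m) (Fin n) ℝ)
    (hK : K = ((1 : Matrix (Fin m) (Fin m) ℝ) + Bᵀ * P * B)⁻¹ * (Bᵀ * P * A)) :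
    ∀ μ : ℂ, (∃ v : Fin n → ℂ, v ≠ 0 ∧
      ((A - B * K).map (fun x : ℝ => (x : ℂ))).mulVec v = μ • v) →
      ‖μ‖ < 1 :=
  discrete_riccati_schur_general n m A B ε hε P hP hric K hK
end

section
/- Let P_δ solve the discrete H₂ Riccati equation P = AᵀPA + δI - AᵀPB(BᵀPB + I)^{-1}BᵀPA and set F_δ = -(BᵀP_δB + I)^{-1}BᵀP_δA and γ_δ = λ_max(BᵀP_δB). Then for any λ ∈ ℂ satisfying |λ - (1 + 1/γ_δ)| < √(1+γ_δ)/γ_δ, the matrix A + λBF_δ is Schur stable. -/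
/-!
With `R = BᴴPB + 1` the gain satisfies `BᴴPA = -RF`, so the Riccati equation becomes
`AᴴPA = P - δ + FᴴRF`, and expanding the closed loop gives the Lyapunov identity
`P - (A + λBF)ᴴ P (A + λBF) = δ + Fᴴ (|λ|² - |1 - λ|² R) F`.
Since `R ≤ 1 + γ`, the disc condition, which is equivalent to `(1 + γ)|1 - λ|² < |λ|²`, makes the
middle factor positive semidefinite. The left side is therefore positive definite, and evaluating it
on an eigenvector `v` of `A + λBF` with eigenvalue `μ` gives `(1 - |μ|²) vᴴPv > 0`.
The real data are embedded in `ℂ` so that complex eigenvectors can be used.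
-/

open Matrix

open scoped ComplexOrder

section Algebra

variable {𝕜 : Type*} [CommRing 𝕜] {n m : Type*} [Fintype m] [DecidableEq m]

lemma eq_neg_mul_of_eq_neg_inv_mul {R : Matrix m m 𝕜} {X F : Matrix m n 𝕜} (hR : IsUnit R.det)
    (hF : F = -(R⁻¹ * X)) : X = -(R * F) := by
  rw [hF, Matrix.mul_neg, neg_neg, mul_nonsing_inv_cancel_left _ _ hR]

variable [StarRing 𝕜] [Fintype n] {A P Q : Matrix n n 𝕜} {B : Matrix n m 𝕜} {F : Matrix m n 𝕜}

lemma conjTranspose_mul_mul_eq_neg (hP : Pᴴ = P) (hRF : Bᴴ * P * A = -((Bᴴ * P * B + 1) * F)) :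
    Aᴴ * P * B = -(Fᴴ * (Bᴴ * P * B + 1)) := by
  simpa [hP, Matrix.mul_assoc] using congrArg conjTranspose hRF

lemma riccati_eq_sub_add (hP : Pᴴ = P) (hR : IsUnit (Bᴴ * P * B + 1).det)
    (hric : P = Aᴴ * P * A + Q - Aᴴ * P * B * (Bᴴ * P * B + 1)⁻¹ * Bᴴ * P * A)
    (hRF : Bᴴ * P * A = -((Bᴴ * P * B + 1) * F)) :
    Aᴴ * P * A = P - Q + Fᴴ * (Bᴴ * P * B + 1) * F := by
  have hgain : Aᴴ * P * B * (Bᴴ * P * B + 1)⁻¹ * Bᴴ * P * A = Fᴴ * (Bᴴ * P * B + 1) * F := by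
    rw [show Aᴴ * P * B * (Bᴴ * P * B + 1)⁻¹ * Bᴴ * P * A =
        Aᴴ * P * B * (Bᴴ * P * B + 1)⁻¹ * (Bᴴ * P * A) by simp only [Matrix.mul_assoc],
      hRF, conjTranspose_mul_mul_eq_neg hP hRF, Matrix.neg_mul, Matrix.neg_mul, Matrix.mul_neg,
      neg_neg, Matrix.mul_assoc (Fᴴ * _), nonsing_inv_mul_cancel_left _ _ hR]
  rw [hgain] at hric
  nth_rewrite 2 [hric]
  abel

lemma sub_conjTranspose_closedLoop_eq (hP : Pᴴ = P)
    (hRF : Bᴴ * P * A = -((Bᴴ * P * B + 1) * F))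
    (hAPA : Aᴴ * P * A = P - Q + Fᴴ * (Bᴴ * P * B + 1) * F) (l : 𝕜) :
    P - (A + l • (B * F))ᴴ * P * (A + l • (B * F)) =
      Q + Fᴴ * ((star l * l) • 1 - (star (1 - l) * (1 - l)) • (Bᴴ * P * B + 1)) * F := by
  have expand : (A + l • (B * F))ᴴ * P * (A + l • (B * F)) = Aᴴ * P * A + l • (Aᴴ * P * B * F)
      + star l • (Fᴴ * (Bᴴ * P * A)) + (star l * l) • (Fᴴ * (Bᴴ * P * B) * F) := by
    simp only [conjTranspose_add, conjTranspose_smul, conjTranspose_mul, Matrix.add_mul,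
      Matrix.mul_add, Matrix.smul_mul, Matrix.mul_smul, Matrix.mul_assoc]
    module
  rw [expand, hAPA, conjTranspose_mul_mul_eq_neg hP hRF, hRF]
  simp only [Matrix.mul_sub, Matrix.sub_mul, Matrix.mul_add, Matrix.add_mul, Matrix.mul_smul,
    Matrix.smul_mul, Matrix.mul_one, Matrix.one_mul, Matrix.neg_mul, Matrix.mul_neg,
    Matrix.mul_assoc, star_sub, star_one]
  module

end Algebra

section RCLike

variable {𝕜 : Type*} [RCLike 𝕜] {n : Type*}

theorem posSemidef_normSq_smul_one_sub [DecidableEq n] {M : Matrix n n 𝕜} {γ : ℝ}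
    (hM : (γ • 1 - M).PosSemidef) {l : 𝕜} (hl : (1 + γ) * ‖1 - l‖ ^ 2 ≤ ‖l‖ ^ 2) :
    ((star l * l) • 1 - (star (1 - l) * (1 - l)) • (M + 1)).PosSemidef := by
  have h : (star l * l) • 1 - (star (1 - l) * (1 - l)) • (M + 1) =
      (‖1 - l‖ ^ 2) • (γ • 1 - M) + (‖l‖ ^ 2 - (1 + γ) * ‖1 - l‖ ^ 2) • (1 : Matrix n n 𝕜) := by
    simp only [RCLike.star_def, RCLike.conj_mul, RCLike.real_smul_eq_coe_smul (K := 𝕜)]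
    push_cast
    module
  rw [h]
  exact (hM.smul (sq_nonneg _)).add (PosSemidef.one.smul (sub_nonneg.mpr hl))

variable [Fintype n]

def IsSchurStable (M : Matrix n n 𝕜) : Prop :=
  ∀ μ : 𝕜, (∃ v : n → 𝕜, v ≠ 0 ∧ M *ᵥ v = μ • v) → ‖μ‖ < 1

theorem IsSchurStable.of_posDef_sub_conjTranspose_mul_mul {M P : Matrix n n 𝕜}
    (hP : P.PosSemidef) (h : (P - Mᴴ * P * M).PosDef) : IsSchurStable M := by
  rintro μ ⟨v, hv, hMv⟩
  have hquad : star v ⬝ᵥ ((P - Mᴴ * P * M) *ᵥ v) =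
      ((1 - ‖μ‖ ^ 2 : ℝ) : 𝕜) * (star v ⬝ᵥ (P *ᵥ v)) := by
    have hMPM : star v ⬝ᵥ ((Mᴴ * P * M) *ᵥ v) = star (M *ᵥ v) ⬝ᵥ (P *ᵥ (M *ᵥ v)) := by
      rw [star_mulVec, ← dotProduct_mulVec, mulVec_mulVec, mulVec_mulVec, Matrix.mul_assoc]
    rw [sub_mulVec, dotProduct_sub, hMPM, hMv, mulVec_smul, star_smul, smul_dotProduct,
      dotProduct_smul]
    simp only [smul_eq_mul, RCLike.star_def, ← mul_assoc, RCLike.conj_mul]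
    push_cast
    ring
  have hpos := h.re_dotProduct_pos hv
  rw [hquad, RCLike.re_ofReal_mul] at hpos
  have hμ : ‖μ‖ ^ 2 < 1 := by nlinarith [hP.re_dotProduct_nonneg v]
  simpa using hμ

theorem posSemidef_smul_one_sub_of_mem_upperBounds [DecidableEq n] {M : Matrix n n 𝕜}
    (hM : M.IsHermitian) {γ : ℝ}
    (hγ : γ ∈ upperBounds {c : ℝ | ∃ v : n → 𝕜, v ≠ 0 ∧ M *ᵥ v = c • v}) :
    (γ • 1 - M).PosSemidef := by
  open scoped MatrixOrder in
  have hle : M ≤ algebraMap ℝ (Matrix n n 𝕜) γ := by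
    refine le_algebraMap_of_spectrum_le (fun x hx => ?_) hM.isSelfAdjoint
    obtain ⟨i, rfl⟩ := hM.spectrum_real_eq_range_eigenvalues ▸ hx
    exact hγ ⟨_, (hM.eigenvectorBasis.orthonormal.ne_zero i) ∘ (WithLp.ofLp_injective 2 ·),
      hM.mulVec_eigenvectorBasis i⟩
  rwa [Algebra.algebraMap_eq_smul_one] at hle

theorem isSchurStable_add_smul_mul_of_riccati {m : Type*} [Fintype m] [DecidableEq m]
    {A P Q : Matrix n n 𝕜} {B : Matrix n m 𝕜} {F : Matrix m n 𝕜} {γ : ℝ} {l : 𝕜}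
    (hP : P.PosSemidef) (hQ : Q.PosDef)
    (hric : P = Aᴴ * P * A + Q - Aᴴ * P * B * (Bᴴ * P * B + 1)⁻¹ * Bᴴ * P * A)
    (hF : F = -((Bᴴ * P * B + 1)⁻¹ * (Bᴴ * P * A)))
    (hγ : (γ • 1 - Bᴴ * P * B).PosSemidef) (hl : (1 + γ) * ‖1 - l‖ ^ 2 ≤ ‖l‖ ^ 2) :
    IsSchurStable (A + l • (B * F)) := by
  have hR : IsUnit (Bᴴ * P * B + 1).det :=
    (PosDef.posSemidef_add (hP.conjTranspose_mul_mul_same B) PosDef.one).det_pos.ne'.isUnit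
  have hRF := eq_neg_mul_of_eq_neg_inv_mul hR hF
  refine .of_posDef_sub_conjTranspose_mul_mul hP ?_
  rw [sub_conjTranspose_closedLoop_eq hP.isHermitian hRF
    (riccati_eq_sub_add hP.isHermitian hR hric hRF)]
  exact hQ.add_posSemidef ((posSemidef_normSq_smul_one_sub hγ hl).conjTranspose_mul_mul_same F)

end RCLike

theorem one_add_mul_norm_one_sub_sq_lt {γ : ℝ} {l : ℂ}
    (hl : ‖l - (1 + 1 / (γ : ℂ))‖ < √(1 + γ) / γ) : (1 + γ) * ‖1 - l‖ ^ 2 < ‖l‖ ^ 2 := by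
  have hγ : 0 < γ := by
    rcases div_pos_iff.mp ((norm_nonneg _).trans_lt hl) with h | h
    · exact h.2
    · exact absurd h.1 (Real.sqrt_nonneg _).not_gt
  have hscaled : ‖γ * l - (γ + 1)‖ < √(1 + γ) := by
    have : (γ : ℂ) * l - (γ + 1) = γ * (l - (1 + 1 / γ)) := by
      field_simp [Complex.ofReal_ne_zero.mpr hγ.ne']
    rw [this, norm_mul, Complex.norm_real, Real.norm_of_nonneg hγ.le]
    rwa [lt_div_iff₀' hγ] at hl
  have hsq := pow_lt_pow_left₀ hscaled (norm_nonneg _) two_ne_zero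
  rw [Real.sq_sqrt (by positivity)] at hsq
  simp only [Complex.sq_norm, Complex.normSq_apply, Complex.sub_re, Complex.sub_im,
    Complex.mul_re, Complex.mul_im, Complex.ofReal_re, Complex.ofReal_im, Complex.add_re,
    Complex.add_im, Complex.one_re, Complex.one_im] at hsq ⊢
  nlinarith

namespace Matrix

variable {l n m : Type*}

theorem _root_.RingHom.map_nonsing_inv {K L : Type*} [Field K] [Field L] [Fintype n]
    [DecidableEq n] (f : K →+* L) (M : Matrix n n K) : M⁻¹.map f = (M.map f)⁻¹ := by
  have hadj := f.map_adjugate M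
  rw [RingHom.mapMatrix_apply, RingHom.mapMatrix_apply] at hadj
  rw [inv_def, inv_def, Matrix.map_smul' _ _ _ (map_mul f), hadj, ← RingHom.mapMatrix_apply,
    ← f.map_det, Ring.inverse_eq_inv', Ring.inverse_eq_inv', map_inv₀]

theorem map_ofReal_mul [Fintype n] (M : Matrix l n ℝ) (N : Matrix n m ℝ) :
    (M * N).map (fun x : ℝ => (x : ℂ)) =
      M.map (fun x : ℝ => (x : ℂ)) * N.map (fun x : ℝ => (x : ℂ)) :=
  Matrix.map_mul (f := Complex.ofRealHom)

theorem map_ofReal_inv [Fintype n] [DecidableEq n] (M : Matrix n n ℝ) :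
    M⁻¹.map (fun x : ℝ => (x : ℂ)) = (M.map (fun x : ℝ => (x : ℂ)))⁻¹ :=
  Complex.ofRealHom.map_nonsing_inv M

theorem map_ofReal_transpose (M : Matrix n m ℝ) :
    Mᵀ.map (fun x : ℝ => (x : ℂ)) = (M.map (fun x : ℝ => (x : ℂ)))ᴴ := by
  rw [← conjTranspose_map _ fun x => (Complex.conj_ofReal x).symm,
    conjTranspose_eq_transpose_of_trivial]

theorem map_ofReal_smul (c : ℝ) (M : Matrix n m ℝ) :
    (c • M).map (fun x : ℝ => (x : ℂ)) = (c : ℂ) • M.map (fun x : ℝ => (x : ℂ)) := by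
  ext; simp

theorem PosSemidef.map_ofReal_s17 [Fintype n] [DecidableEq n] {S : Matrix n n ℝ}
    (hS : S.PosSemidef) : (S.map (fun x : ℝ => (x : ℂ))).PosSemidef := by
  open scoped MatrixOrder in
  obtain ⟨C, rfl⟩ := CStarAlgebra.nonneg_iff_eq_star_mul_self.mp hS.nonneg
  rw [star_eq_conjTranspose, conjTranspose_eq_transpose_of_trivial, map_ofReal_mul,
    map_ofReal_transpose]
  exact posSemidef_conjTranspose_mul_self _

end Matrix

theorem discrete_low_gain_robustness_general (n m : ℕ) (A : Matrix (Fin n) (Fin n) ℝ)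
    (B : Matrix (Fin n) (Fin m) ℝ)
    (δ : ℝ) (hδ : 0 < δ)
    (P : Matrix (Fin n) (Fin n) ℝ) (hP : P.PosDef)
    (hric : P = Aᵀ * P * A + δ • (1 : Matrix (Fin n) (Fin n) ℝ) -
      Aᵀ * P * B * (Bᵀ * P * B + (1 : Matrix (Fin m) (Fin m) ℝ))⁻¹ * Bᵀ * P * A)
    (F : Matrix (Fin m) (Fin n) ℝ)
    (hF : F = -((Bᵀ * P * B + (1 : Matrix (Fin m) (Fin m) ℝ))⁻¹ * (Bᵀ * P * A)))
    (γ : ℝ)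
    (hγ : IsGreatest {c : ℝ | ∃ v : Fin m → ℝ, v ≠ 0 ∧
      (Bᵀ * P * B).mulVec v = c • v} γ)
    (lam : ℂ)
    (hlam : ‖lam - (1 + 1 / (γ : ℂ))‖ < Real.sqrt (1 + γ) / γ) :
    ∀ μ : ℂ, (∃ v : Fin n → ℂ, v ≠ 0 ∧
      (A.map (fun x : ℝ => (x : ℂ)) +
        lam • ((B * F).map (fun x : ℝ => (x : ℂ)))).mulVec v = μ • v) →
      ‖μ‖ < 1 := by
  have hBPB : (γ • 1 - Bᵀ * P * B).PosSemidef := by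
    refine posSemidef_smul_one_sub_of_mem_upperBounds ?_ hγ.2
    simpa using isHermitian_conjTranspose_mul_mul B hP.isHermitian
  have hstable : IsSchurStable (A.map (fun x : ℝ => (x : ℂ)) +
      lam • (B.map (fun x : ℝ => (x : ℂ)) * F.map (fun x : ℝ => (x : ℂ)))) :=
    isSchurStable_add_smul_mul_of_riccati (P := P.map (fun x : ℝ => (x : ℂ))) (Q := δ • 1)
      (γ := γ) hP.posSemidef.map_ofReal_s17 (PosDef.one.smul hδ)
      (by simpa [map_ofReal_mul, map_ofReal_transpose, map_ofReal_inv, map_ofReal_smul,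
          Matrix.map_add, Matrix.map_sub, Matrix.map_one]
        using congrArg (Matrix.map · (fun x : ℝ => (x : ℂ))) hric)
      (by simpa [map_ofReal_mul, map_ofReal_transpose, map_ofReal_inv, Matrix.map_add,
          Matrix.map_neg, Matrix.map_one]
        using congrArg (Matrix.map · (fun x : ℝ => (x : ℂ))) hF)
      (by simpa [map_ofReal_mul, map_ofReal_transpose, map_ofReal_smul, Matrix.map_sub,
          Matrix.map_one] using hBPB.map_ofReal_s17)
      (one_add_mul_norm_one_sub_sq_lt hlam).le
  rw [map_ofReal_mul]
  exact hstable

/-- Robustness of the discrete low-gain design: if `P_δ` solves the discrete `H₂`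
Riccati equation `P = AᵀPA + δI - AᵀPB(BᵀPB + I)⁻¹BᵀPA`, `F_δ = -(BᵀP_δB + I)⁻¹BᵀP_δA`
and `γ_δ = λ_max(BᵀP_δB)`, then for any `λ ∈ ℂ` with
`|λ - (1 + 1/γ_δ)| < √(1+γ_δ)/γ_δ`, the matrix `A + λ B F_δ` is Schur stable. -/
theorem discrete_low_gain_robustness (n m : ℕ) (A : Matrix (Fin n) (Fin n) ℝ)
    (B : Matrix (Fin n) (Fin m) ℝ)
    (hstab : ∃ K : Matrix (Fin m) (Fin n) ℝ, ∀ μ : ℂ,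
      (∃ v : Fin n → ℂ, v ≠ 0 ∧
        ((A + B * K).map (fun x : ℝ => (x : ℂ))).mulVec v = μ • v) →
      ‖μ‖ < 1)
    (hA : ∀ μ : ℂ, (∃ v : Fin n → ℂ, v ≠ 0 ∧
      (A.map (fun x : ℝ => (x : ℂ))).mulVec v = μ • v) → ‖μ‖ ≤ 1)
    (δ : ℝ) (hδ : 0 < δ)
    (P : Matrix (Fin n) (Fin n) ℝ) (hP : P.PosDef) (hPsymm : P.IsSymm)
    (hric : P = Aᵀ * P * A + δ • (1 : Matrix (Fin n) (Fin n) ℝ) -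
      Aᵀ * P * B * (Bᵀ * P * B + (1 : Matrix (Fin m) (Fin m) ℝ))⁻¹ * Bᵀ * P * A)
    (F : Matrix (Fin m) (Fin n) ℝ)
    (hF : F = -((Bᵀ * P * B + (1 : Matrix (Fin m) (Fin m) ℝ))⁻¹ * (Bᵀ * P * A)))
    (γ : ℝ)
    (hγ : IsGreatest {c : ℝ | ∃ v : Fin m → ℝ, v ≠ 0 ∧
      (Bᵀ * P * B).mulVec v = c • v} γ)
    (lam : ℂ)
    (hlam : ‖lam - (1 + 1 / (γ : ℂ))‖ < Real.sqrt (1 + γ) / γ) :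
    ∀ μ : ℂ, (∃ v : Fin n → ℂ, v ≠ 0 ∧
      (A.map (fun x : ℝ => (x : ℂ)) +
        lam • ((B * F).map (fun x : ℝ => (x : ℂ)))).mulVec v = μ • v) →
      ‖μ‖ < 1 :=
  discrete_low_gain_robustness_general n m A B δ hδ P hP hric F hF γ hγ lam hlam
end
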